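/- arXiv:2506.08307 — 3 statements merged into one kernel-verified Lean document; each statement's English description precedes it below -/
import Mathlib

section
/- Let n > 1, k ≥ 3, and let g_1, …, g_n ∈ C_0^k(M^n, 𝔸) have compact support. If there exists f ∈ C^k(M^n, 𝔸) with compact support such that ∂̄_j f = g_j on M^n for j = 1, …, n, then ∂̄_i(∂_j g_j) = Δ_j g_i on M^n for all i, j ∈ {1, …, n}. -/
open MeasureTheory

noncomputable section

/-- A real alternative `*`-algebra of finite dimension `> 1`, with a fixed
hypercomplex basis `v 0 = 1, v 1, …, v m` spanning the hypercomplex subspace `M`.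
Multiplication is `ℝ`-bilinear (bundled as a linear map). -/
structure HCAlg (𝔸 : Type) [NormedAddCommGroup 𝔸] [NormedSpace ℝ 𝔸] (m : ℕ) : Type where
  mul : 𝔸 →ₗ[ℝ] 𝔸 →ₗ[ℝ] 𝔸
  one : 𝔸
  conj : 𝔸 →ₗ[ℝ] 𝔸
  findim : FiniteDimensional ℝ 𝔸
  dim_gt_one : 1 < Module.finrank ℝ 𝔸
  one_mul' : ∀ a, mul one a = a
  mul_one' : ∀ a, mul a one = a
  alt_left : ∀ a b, mul a (mul a b) = mul (mul a a) b
  alt_right : ∀ a b, mul (mul b a) a = mul b (mul a a)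
  conj_invol : ∀ a, conj (conj a) = a
  conj_mul' : ∀ a b, conj (mul a b) = mul (conj b) (conj a)
  conj_one : conj one = one
  hm : 1 ≤ m
  v : Fin (m + 1) → 𝔸
  v_indep : LinearIndependent ℝ v
  v_zero : v 0 = one
  v_trace : ∀ s, s ≠ 0 → v s + conj (v s) = 0
  v_norm : ∀ s, s ≠ 0 → mul (v s) (conj (v s)) = one
  v_anticomm : ∀ s t, s ≠ 0 → t ≠ 0 → s ≠ t → mul (v s) (v t) = -(mul (v t) (v s))

variable {𝔸 : Type} [NormedAddCommGroup 𝔸] [NormedSpace ℝ 𝔸] {m n : ℕ}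

/-- `M^n`, identified with `ℝ^{(m+1)n}` via the coordinates `x j s`. -/
abbrev Mn (n m : ℕ) := Fin n → Fin (m + 1) → ℝ

/-- Euclidean norm of a point of `M` (in coordinates). -/
def enormM (c : Fin (m + 1) → ℝ) : ℝ := Real.sqrt (∑ s, c s ^ 2)

/-- Euclidean norm of a point of `M^n` (in coordinates). -/
def enormMn (x : Mn n m) : ℝ := Real.sqrt (∑ j, ∑ s, x j s ^ 2)

/-- Partial derivative `∂f/∂x_{j,s}` for functions on `M^n`. -/
def pd {E : Type} [NormedAddCommGroup E] [NormedSpace ℝ E]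
    (f : Mn n m → E) (j : Fin n) (s : Fin (m + 1)) (x : Mn n m) : E :=
  fderiv ℝ f x (Pi.single j (Pi.single s 1))

/-- Partial derivative `∂f/∂x_s` for functions on `M`. -/
def pd1 {E : Type} [NormedAddCommGroup E] [NormedSpace ℝ E]
    (f : (Fin (m + 1) → ℝ) → E) (s : Fin (m + 1)) (x : Fin (m + 1) → ℝ) : E :=
  fderiv ℝ f x (Pi.single s 1)

/-- The Dirac (Cauchy–Riemann) operator `∂̄_j = ∑_s v_s ∂/∂x_{j,s}`. -/
def dbar (H : HCAlg 𝔸 m) (f : Mn n m → 𝔸) (j : Fin n) (x : Mn n m) : 𝔸 :=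
  ∑ s, H.mul (H.v s) (pd f j s x)

/-- The conjugated Dirac operator `∂_j = ∑_s v_s^c ∂/∂x_{j,s}`. -/
def dconj (H : HCAlg 𝔸 m) (f : Mn n m → 𝔸) (j : Fin n) (x : Mn n m) : 𝔸 :=
  ∑ s, H.mul (H.conj (H.v s)) (pd f j s x)

/-- The Laplacian `Δ_j = ∑_s ∂²/∂x_{j,s}²` in the `j`-th block of variables. -/
def lap {E : Type} [NormedAddCommGroup E] [NormedSpace ℝ E]
    (f : Mn n m → E) (j : Fin n) (x : Mn n m) : E :=
  ∑ s, pd (pd f j s) j s x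

/-- Surface area of the unit `(N-1)`-sphere in `ℝ^N`: `σ_N = 2 π^{N/2} / Γ(N/2)`. -/
def usigma (N : ℕ) : ℝ := 2 * Real.pi ^ ((N : ℝ) / 2) / Real.Gamma ((N : ℝ) / 2)

/-- Embedding of coordinates into the hypercomplex subspace `M ⊆ 𝔸`. -/
def embM (H : HCAlg 𝔸 m) (c : Fin (m + 1) → ℝ) : 𝔸 := ∑ s, c s • H.v s

/-- The Cauchy kernel `E(x) = σ_{m+1}⁻¹ x^c / |x|^{m+1}` on `M`. -/
def CauchyE (H : HCAlg 𝔸 m) (c : Fin (m + 1) → ℝ) : 𝔸 :=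
  (usigma (m + 1) * enormM c ^ (m + 1))⁻¹ • H.conj (embM H c)

/-- The Bochner–Martinelli kernel components `K_j(x) = σ_N⁻¹ x_j^c / |x|^N`, `N = (m+1)n`. -/
def Kker (H : HCAlg 𝔸 m) (n : ℕ) (j : Fin n) (x : Mn n m) : 𝔸 :=
  (usigma ((m + 1) * n) * enormMn x ^ ((m + 1) * n))⁻¹ • H.conj (embM H (x j))

/-- `Tsol g (x) = −∫_M E(y₁ − x₁) (g(y₁, x⁰)) dV(y₁)`. -/
def Tsol (H : HCAlg 𝔸 m) (hn : 0 < n) (g : Mn n m → 𝔸) (x : Mn n m) : 𝔸 :=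
  - ∫ y1 : Fin (m + 1) → ℝ,
      H.mul (CauchyE H (y1 - x ⟨0, hn⟩)) (g (Function.update x ⟨0, hn⟩ y1))

/-- `Fint g (x) = ∫_M E(y₁) (g(y₁ + x₁, x⁰)) dV(y₁)`. -/
def Fint (H : HCAlg 𝔸 m) (hn : 0 < n) (g : Mn n m → 𝔸) (x : Mn n m) : 𝔸 :=
  ∫ y1 : Fin (m + 1) → ℝ,
      H.mul (CauchyE H y1) (g (Function.update x ⟨0, hn⟩ (y1 + x ⟨0, hn⟩)))

/-! The system forces `g_j = ∂̄_j f`. In an alternative algebra `v_s^c (v_s a) = a`, and for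
`s ≠ t` the terms `v_s^c (v_t a) + v_t^c (v_s a)` cancel (anticommutation plus linearized
alternativity), so `∂_j ∂̄_j = Δ_j` on `C²` functions. Since `∂̄_i` and `Δ_j` have constant
coefficients they commute on `C³` functions, whence
`∂̄_i ∂_j g_j = ∂̄_i Δ_j f = Δ_j ∂̄_i f = Δ_j g_i`. -/

namespace HCAlg

variable (H : HCAlg 𝔸 m)

lemma mul_mul_add_mul_mul (x y a : 𝔸) :
    H.mul x (H.mul y a) + H.mul y (H.mul x a)
      = H.mul (H.mul x y) a + H.mul (H.mul y x) a := by
  have h := H.alt_left (x + y) a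
  simp only [map_add, LinearMap.add_apply, H.alt_left x a, H.alt_left y a] at h
  have h' : (H.mul x (H.mul y a) + H.mul y (H.mul x a))
        + (H.mul (H.mul x x) a + H.mul (H.mul y y) a)
      = (H.mul (H.mul x y) a + H.mul (H.mul y x) a)
        + (H.mul (H.mul x x) a + H.mul (H.mul y y) a) := by
    refine Eq.trans ?_ (h.trans ?_) <;> abel
  exact add_right_cancel h'

lemma conj_v_of_ne_zero {s : Fin (m + 1)} (hs : s ≠ 0) : H.conj (H.v s) = -H.v s :=
  eq_neg_of_add_eq_zero_right (H.v_trace s hs)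

lemma v_mul_self_of_ne_zero {s : Fin (m + 1)} (hs : s ≠ 0) : H.mul (H.v s) (H.v s) = -H.one := by
  have h := H.v_norm s hs
  rwa [H.conj_v_of_ne_zero hs, map_neg, neg_eq_iff_eq_neg] at h

lemma conj_v_mul_v_mul (s : Fin (m + 1)) (a : 𝔸) :
    H.mul (H.conj (H.v s)) (H.mul (H.v s) a) = a := by
  by_cases hs : s = 0
  · rw [hs, H.v_zero, H.conj_one, H.one_mul', H.one_mul']
  · rw [H.conj_v_of_ne_zero hs, map_neg, LinearMap.neg_apply, H.alt_left,
      H.v_mul_self_of_ne_zero hs, map_neg, LinearMap.neg_apply, H.one_mul', neg_neg]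

lemma conj_v_mul_v_mul_add_swap {t u : Fin (m + 1)} (htu : t ≠ u) (a : 𝔸) :
    H.mul (H.conj (H.v t)) (H.mul (H.v u) a) + H.mul (H.conj (H.v u)) (H.mul (H.v t) a) = 0 := by
  rcases eq_or_ne t 0 with rfl | ht
  · rw [H.v_zero, H.conj_one, H.one_mul', H.conj_v_of_ne_zero htu.symm, H.one_mul', map_neg,
      LinearMap.neg_apply, add_neg_cancel]
  rcases eq_or_ne u 0 with rfl | hu
  · rw [H.v_zero, H.conj_one, H.one_mul', H.conj_v_of_ne_zero ht, H.one_mul', map_neg,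
      LinearMap.neg_apply, neg_add_cancel]
  rw [H.conj_v_of_ne_zero ht, H.conj_v_of_ne_zero hu, map_neg, map_neg, LinearMap.neg_apply,
    LinearMap.neg_apply, ← neg_add, mul_mul_add_mul_mul, H.v_anticomm t u ht hu htu, map_neg,
    LinearMap.neg_apply, neg_add_cancel, neg_zero]

lemma sum_conj_v_mul_v_mul_of_symm (A : Fin (m + 1) → Fin (m + 1) → 𝔸)
    (hA : ∀ t u, A t u = A u t) :
    ∑ t, ∑ u, H.mul (H.conj (H.v t)) (H.mul (H.v u) (A t u)) = ∑ s, A s s := by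
  set B := fun t u => H.mul (H.conj (H.v t)) (H.mul (H.v u) (A t u))
  have hB : ∀ t u, B t u + B u t = if t = u then (2 : ℝ) • A t t else 0 := by
    intro t u
    split_ifs with htu
    · subst htu
      simp only [B, two_smul, H.conj_v_mul_v_mul]
    · simp only [B]
      rw [hA u t]
      exact H.conj_v_mul_v_mul_add_swap htu _
  apply smul_right_injective 𝔸 (two_ne_zero (α := ℝ))
  calc (2 : ℝ) • ∑ t, ∑ u, B t u = ∑ t, ∑ u, (B t u + B u t) := by
        rw [two_smul]
        conv_lhs => rhs; rw [Finset.sum_comm]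
        simp only [Finset.sum_add_distrib]
    _ = (2 : ℝ) • ∑ s, A s s := by
        simp only [hB, Finset.sum_ite_eq, Finset.mem_univ, if_true, Finset.smul_sum]

end HCAlg

section PartialDerivatives

variable {E F : Type} [NormedAddCommGroup E] [NormedSpace ℝ E]
  [NormedAddCommGroup F] [NormedSpace ℝ F]

lemma contDiff_pd {k k' : WithTop ℕ∞} {f : Mn n m → E} (hf : ContDiff ℝ k f)
    (h : k' + 1 ≤ k) (j : Fin n) (s : Fin (m + 1)) : ContDiff ℝ k' (pd f j s) :=
  (ContinuousLinearMap.apply ℝ E (Pi.single j (Pi.single s 1) : Mn n m)).contDiff.comp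
    (hf.fderiv_right h)

lemma pd_comp_clm (T : E →L[ℝ] F) {f : Mn n m → E} {x : Mn n m}
    (hf : DifferentiableAt ℝ f x) (j : Fin n) (s : Fin (m + 1)) :
    pd (fun y => T (f y)) j s x = T (pd f j s x) := by
  simp only [pd, fderiv_fun_comp x T.differentiableAt hf, ContinuousLinearMap.fderiv,
    ContinuousLinearMap.coe_comp, Function.comp_apply]

lemma pd_finset_sum {ι : Type} (u : Finset ι) (F : ι → Mn n m → E) {x : Mn n m}
    (h : ∀ i ∈ u, DifferentiableAt ℝ (F i) x) (j : Fin n) (s : Fin (m + 1)) :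
    pd (fun y => ∑ i ∈ u, F i y) j s x = ∑ i ∈ u, pd (F i) j s x := by
  simp only [pd, fderiv_fun_sum h, FunLike.coe_sum, Finset.sum_apply]

lemma pd_pd_comm {f : Mn n m → E} (hf : ContDiff ℝ 2 f) (i j : Fin n)
    (s t : Fin (m + 1)) (x : Mn n m) :
    pd (pd f j s) i t x = pd (pd f i t) j s x := by
  have hsymm : IsSymmSndFDerivAt ℝ f x := hf.contDiffAt.isSymmSndFDerivAt (by norm_num)
  have hdiff : Differentiable ℝ (fderiv ℝ f) :=
    (hf.fderiv_right (by norm_num : (1 : WithTop ℕ∞) + 1 ≤ 2)).differentiable one_ne_zero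
  have hsecond : ∀ a b c d, pd (pd f a b) c d x = fderiv ℝ (fderiv ℝ f) x
      (Pi.single c (Pi.single d 1)) (Pi.single a (Pi.single b 1)) := fun a b c d =>
    pd_comp_clm (ContinuousLinearMap.apply ℝ E (Pi.single a (Pi.single b 1) : Mn n m))
      (hdiff x) c d
  rw [hsecond, hsecond, hsymm]

end PartialDerivatives

section DiracOperators

variable (H : HCAlg 𝔸 m)

lemma HCAlg.differentiableAt_mul_left (a : 𝔸) {f : Mn n m → 𝔸} {x : Mn n m}
    (hf : DifferentiableAt ℝ f x) : DifferentiableAt ℝ (fun y => H.mul a (f y)) x :=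
  have := H.findim
  (LinearMap.toContinuousLinearMap (H.mul a)).differentiableAt.comp x hf

lemma HCAlg.pd_mul_left (a : 𝔸) {f : Mn n m → 𝔸} {x : Mn n m}
    (hf : DifferentiableAt ℝ f x) (j : Fin n) (s : Fin (m + 1)) :
    pd (fun y => H.mul a (f y)) j s x = H.mul a (pd f j s x) :=
  have := H.findim
  pd_comp_clm (LinearMap.toContinuousLinearMap (H.mul a)) hf j s

lemma dbar_finset_sum {ι : Type} (u : Finset ι) (F : ι → Mn n m → 𝔸) {x : Mn n m}
    (h : ∀ t ∈ u, DifferentiableAt ℝ (F t) x) (i : Fin n) :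
    dbar H (fun y => ∑ t ∈ u, F t y) i x = ∑ t ∈ u, dbar H (F t) i x := by
  simp only [dbar, pd_finset_sum u F h, map_sum]
  exact Finset.sum_comm

lemma pd_dbar {f : Mn n m → 𝔸} (hf : ContDiff ℝ 2 f) (i j : Fin n) (t : Fin (m + 1)) :
    pd (dbar H f i) j t = dbar H (pd f j t) i := by
  have hpd : ∀ s, Differentiable ℝ (pd f i s) := fun s =>
    (contDiff_pd hf (by norm_num : (1 : WithTop ℕ∞) + 1 ≤ 2) i s).differentiable one_ne_zero
  funext x
  rw [show dbar H f i = fun y => ∑ s, H.mul (H.v s) (pd f i s y) from rfl,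
    pd_finset_sum _ _ (fun s _ => H.differentiableAt_mul_left _ (hpd s x))]
  refine Finset.sum_congr rfl fun s _ => ?_
  rw [H.pd_mul_left _ (hpd s x), pd_pd_comm hf]

lemma dconj_dbar {f : Mn n m → 𝔸} (hf : ContDiff ℝ 2 f) (j : Fin n) :
    dconj H (dbar H f j) j = lap f j := by
  funext x
  simp only [dconj, pd_dbar H hf, dbar, map_sum]
  exact H.sum_conj_v_mul_v_mul_of_symm (fun t u => pd (pd f j t) j u x)
    fun t u => pd_pd_comm hf j j t u x

lemma dbar_lap {f : Mn n m → 𝔸} (hf : ContDiff ℝ 3 f) (i j : Fin n) :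
    dbar H (lap f j) i = lap (dbar H f i) j := by
  have hpd : ∀ t, ContDiff ℝ 2 (pd f j t) := fun t =>
    contDiff_pd hf (by norm_num : (2 : WithTop ℕ∞) + 1 ≤ 3) j t
  have hpdpd : ∀ t, Differentiable ℝ (pd (pd f j t) j t) := fun t =>
    (contDiff_pd (hpd t) (by norm_num : (1 : WithTop ℕ∞) + 1 ≤ 2) j t).differentiable one_ne_zero
  funext x
  rw [show lap f j = fun y => ∑ t, pd (pd f j t) j t y from rfl,
    dbar_finset_sum H _ _ fun t _ => hpdpd t x]
  refine Finset.sum_congr rfl fun t _ => ?_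
  rw [pd_dbar H (hf.of_le (by norm_num)), pd_dbar H (hpd t)]

end DiracOperators

theorem solution_implies_compat_general (H : HCAlg 𝔸 m) (k : ℕ) (hk : 3 ≤ k)
    (g : Fin n → Mn n m → 𝔸)
    (f : Mn n m → 𝔸) (hf : ContDiff ℝ k f)
    (hsol : ∀ (j : Fin n) (x : Mn n m), dbar H f j x = g j x) :
    ∀ (i j : Fin n) (x : Mn n m), dbar H (dconj H (g j) j) i x = lap (g i) j x := by
  intro i j x
  have hf3 : ContDiff ℝ 3 f := hf.of_le (by exact_mod_cast hk)
  have hg : ∀ j, g j = dbar H f j := fun j => funext fun y => (hsol j y).symm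
  rw [hg j, hg i, dconj_dbar H (hf3.of_le (by norm_num)), dbar_lap H hf3]

/-- (i) ⇒ (iii) of Theorem 5.2: if the system `∂̄_j f = g_j` has a compactly supported
`C^k` solution, then `∂̄_i (∂_j g_j) = Δ_j g_i` on `M^n` for all `i, j`. -/
theorem solution_implies_compat (H : HCAlg 𝔸 m) (hn : 1 < n) (k : ℕ) (hk : 3 ≤ k)
    (g : Fin n → Mn n m → 𝔸)
    (hg : ∀ j, ContDiff ℝ k (g j)) (hgs : ∀ j, HasCompactSupport (g j))
    (f : Mn n m → 𝔸) (hf : ContDiff ℝ k f) (hfs : HasCompactSupport f)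
    (hsol : ∀ (j : Fin n) (x : Mn n m), dbar H f j x = g j x) :
    ∀ (i j : Fin n) (x : Mn n m), dbar H (dconj H (g j) j) i x = lap (g i) j x :=
  solution_implies_compat_general H k hk g f hf hsol

end
end

section
/- Let Ω be a domain in M^n ≅ ℝ^{(m+1)n} and fix j ∈ {1, …, n}. Let φ = ∑_{s=0}^m φ_s v_s ∈ C¹(Ω, M) with real-valued component functions φ_s satisfying the symmetry condition ∂φ_t/∂x_{j,s} = ∂φ_s/∂x_{j,t} on Ω for all 1 ≤ s ≤ m and 1 ≤ t ≤ m − 1. Then for every a ∈ 𝔸 and every point of Ω, ∑_{s=1}^m [v_s, ∂̄_j φ_s, a] = 0, where [a,b,c] := (ab)c − a(bc) is the associator. -/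
open MeasureTheory

noncomputable section

variable {𝔸 : Type} [NormedAddCommGroup 𝔸] [NormedSpace ℝ 𝔸] {m n : ℕ}

/-!
In an alternative algebra the associator is alternating, in particular antisymmetric in its
first two arguments, and it vanishes when the middle argument is `1`. Expanding `∂̄_j φ_s` in
the basis turns the sum into `∑_{s,t ≥ 1} (∂φ_s/∂x_{j,t}) [v_s, v_t, a]`, a sum of
coefficients symmetric in `(s, t)` against terms antisymmetric in `(s, t)`, which is zero.
-/

theorem Finset.sum_sum_smul_eq_zero_of_symm_of_antisymm {ι R M : Type*} [Semiring R]
    [AddCommGroup M] [Module R M] [IsAddTorsionFree M] (P : Finset ι) (c : ι → ι → R)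
    (F : ι → ι → M) (hc : ∀ s ∈ P, ∀ t ∈ P, s ≠ t → c s t = c t s)
    (hF : ∀ s ∈ P, ∀ t ∈ P, F s t = -F t s) :
    ∑ s ∈ P, ∑ t ∈ P, c s t • F s t = 0 := by
  have hcF : ∀ s ∈ P, ∀ t ∈ P, c s t • F s t = -(c t s • F t s) := by
    intro s hs t ht
    rcases eq_or_ne s t with rfl | hst
    · rw [self_eq_neg.mp (hF s hs s hs), smul_zero, neg_zero]
    · rw [hc s hs t ht hst, hF s hs t ht, smul_neg]
  refine self_eq_neg.mp ?_
  calc ∑ s ∈ P, ∑ t ∈ P, c s t • F s t = ∑ t ∈ P, ∑ s ∈ P, c s t • F s t := Finset.sum_comm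
    _ = ∑ t ∈ P, ∑ s ∈ P, -(c t s • F t s) :=
      Finset.sum_congr rfl fun t ht => Finset.sum_congr rfl fun s hs => hcF s hs t ht
    _ = -∑ s ∈ P, ∑ t ∈ P, c s t • F s t := by simp only [Finset.sum_neg_distrib]

namespace LinearMap

variable {R M : Type*} [CommRing R] [AddCommGroup M] [Module R M] (mul : M →ₗ[R] M →ₗ[R] M)

def associator (a b c : M) : M := mul (mul a b) c - mul a (mul b c)

theorem associator_sum_smul_middle {ι : Type*} (P : Finset ι) (a : M) (w : ι → R) (b : ι → M)
    (c : M) :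
    mul.associator a (∑ t ∈ P, w t • b t) c = ∑ t ∈ P, w t • mul.associator a (b t) c := by
  simp only [associator, map_sum, map_smul, LinearMap.sum_apply, LinearMap.smul_apply, smul_sub,
    Finset.sum_sub_distrib]

theorem associator_self_left (h : ∀ a b, mul a (mul a b) = mul (mul a a) b) (a c : M) :
    mul.associator a a c = 0 := by
  rw [associator, h, sub_self]

theorem associator_swap_left (h : ∀ a b, mul a (mul a b) = mul (mul a a) b) (a b c : M) :
    mul.associator a b c = -mul.associator b a c := by
  have hpolar : mul.associator (a + b) (a + b) c
      = mul.associator a a c + (mul.associator a b c + mul.associator b a c)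
        + mul.associator b b c := by
    simp only [associator, map_add, LinearMap.add_apply]
    abel
  rw [associator_self_left mul h, associator_self_left mul h, associator_self_left mul h,
    zero_add, add_zero] at hpolar
  exact eq_neg_of_add_eq_zero_left hpolar.symm

theorem associator_eq_zero_of_middle_unit {e : M} (he_left : ∀ b, mul e b = b)
    (he_right : ∀ a, mul a e = a) (a c : M) : mul.associator a e c = 0 := by
  rw [associator, he_left, he_right, sub_self]

end LinearMap

/-- Of two distinct indices in `Fin (m + 1)`, one is below `m`. -/
theorem Fin.symm_of_ne_of_symm_of_lt_last {α : Type*} {m : ℕ} {c : Fin (m + 1) → Fin (m + 1) → α}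
    (h : ∀ s t : Fin (m + 1), s ≠ 0 → t ≠ 0 → (t : ℕ) < m → c t s = c s t)
    {s t : Fin (m + 1)} (hs : s ≠ 0) (ht : t ≠ 0) (hst : s ≠ t) : c s t = c t s := by
  rcases lt_or_ge (t : ℕ) m with htm | htm
  · exact (h s t hs ht htm).symm
  · have hsm : (s : ℕ) < m := by omega
    exact h t s ht hs hsm

theorem associator_sum_vanishes_general (H : HCAlg 𝔸 m)
    (Ω : Set (Mn n m)) (j : Fin n)
    (φ : Fin (m + 1) → Mn n m → ℝ)
    (hsym : ∀ s t : Fin (m + 1), s ≠ 0 → t ≠ 0 → (t : ℕ) < m →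
      ∀ x ∈ Ω, pd (φ t) j s x = pd (φ s) j t x)
    (a : 𝔸) (x : Mn n m) (hx : x ∈ Ω) :
    ∑ s ∈ Finset.univ.filter (fun s : Fin (m + 1) => s ≠ 0),
      (H.mul (H.mul (H.v s) (∑ t, pd (φ s) j t x • H.v t)) a
        - H.mul (H.v s) (H.mul (∑ t, pd (φ s) j t x • H.v t) a)) = 0 := by
  have : IsAddTorsionFree 𝔸 := .of_isTorsionFree ℝ 𝔸
  set P := Finset.univ.filter (fun s : Fin (m + 1) => s ≠ 0)
  set c : Fin (m + 1) → Fin (m + 1) → ℝ := fun s t => pd (φ s) j t x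
  have hv_zero : ∀ s, H.mul.associator (H.v s) (H.v 0) a = 0 := fun s => by
    rw [H.v_zero]
    exact H.mul.associator_eq_zero_of_middle_unit H.one_mul' H.mul_one' _ _
  have hexpand : ∀ s, H.mul.associator (H.v s) (∑ t, c s t • H.v t) a
      = ∑ t ∈ P, c s t • H.mul.associator (H.v s) (H.v t) a := fun s => by
    rw [H.mul.associator_sum_smul_middle, Finset.sum_filter_of_ne]
    intro t _ hne ht
    exact hne (by rw [ht, hv_zero, smul_zero])
  calc _ = ∑ s ∈ P, ∑ t ∈ P, c s t • H.mul.associator (H.v s) (H.v t) a :=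
        Finset.sum_congr rfl fun s _ => hexpand s
    _ = 0 := by
      refine Finset.sum_sum_smul_eq_zero_of_symm_of_antisymm P c _ ?_
        fun s _ t _ => H.mul.associator_swap_left H.alt_left _ _ _
      intro s hs t ht hst
      simp only [P, Finset.mem_filter] at hs ht
      exact Fin.symm_of_ne_of_symm_of_lt_last (fun s t hs ht htm => hsym s t hs ht htm x hx)
        hs.2 ht.2 hst

/-- (Lemma 3.2): if `φ = ∑_s φ_s v_s ∈ C¹(Ω, M)` satisfies the symmetry condition
`∂φ_t/∂x_{j,s} = ∂φ_s/∂x_{j,t}` for `1 ≤ s ≤ m`, `1 ≤ t ≤ m − 1`, then for every `a ∈ 𝔸`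
and every point of `Ω`, `∑_{s=1}^m [v_s, ∂̄_j φ_s, a] = 0`, where
`[a,b,c] = (ab)c − a(bc)` is the associator. -/
theorem associator_sum_vanishes (H : HCAlg 𝔸 m)
    (Ω : Set (Mn n m)) (hΩo : IsOpen Ω) (hΩc : IsConnected Ω) (j : Fin n)
    (φ : Fin (m + 1) → Mn n m → ℝ) (hφ : ∀ s, ContDiffOn ℝ 1 (φ s) Ω)
    (hsym : ∀ s t : Fin (m + 1), s ≠ 0 → t ≠ 0 → (t : ℕ) < m →
      ∀ x ∈ Ω, pd (φ t) j s x = pd (φ s) j t x)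
    (a : 𝔸) (x : Mn n m) (hx : x ∈ Ω) :
    ∑ s ∈ Finset.univ.filter (fun s : Fin (m + 1) => s ≠ 0),
      (H.mul (H.mul (H.v s) (∑ t, pd (φ s) j t x • H.v t)) a
        - H.mul (H.v s) (H.mul (∑ t, pd (φ s) j t x • H.v t) a)) = 0 :=
  associator_sum_vanishes_general H Ω j φ hsym a x hx
end
end

section
/- For every x ∈ M^n, every y ∈ M^n ∖ {x}, and every j ∈ {1, …, n}, the Bochner–Martinelli kernel component satisfies ∂̄_{y_j} K_j(y − x) = ((m+1)/σ_{(m+1)n}) ( 1/|y − x|^{(m+1)n} − n |y_j − x_j|² / |y − x|^{(m+1)n + 2} ), where ∂̄_{y_j} = ∑_{s=0}^m v_s ∂/∂y_{j,s}. -/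
open MeasureTheory

noncomputable section

variable {𝔸 : Type} [NormedAddCommGroup 𝔸] [NormedSpace ℝ 𝔸] {m n : ℕ}

/-! Write `K_j = f • g` with the real factor `f z = σ_N⁻¹ |z|^{-N}`, `N = (m+1)n`, and the
linear map `g z = z_jᶜ`. The Leibniz rule `∂̄_j (f • g) = f ∂̄_j g + (∑_s ∂_{j,s} f v_s) g` reduces the
computation to `∂̄_j g = ∑_s v_s v_sᶜ = m + 1` and `∂_{j,s} f = -N σ_N⁻¹ |z|^{-N-2} z_{j,s}`; the
second term is then a multiple of `z_j z_jᶜ = |z_j|²`, because the cross terms `v_s v_tᶜ` cancel in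
pairs by anticommutativity. -/

theorem Finset.sum_sum_mul_smul_eq_of_antisymm {ι 𝕜 E : Type*} [Fintype ι] [DecidableEq ι]
    [Field 𝕜] [CharZero 𝕜] [AddCommGroup E] [Module 𝕜 E] (c : ι → 𝕜) (A : ι → ι → E)
    (hA : ∀ s t, s ≠ t → A s t = -A t s) :
    ∑ s, ∑ t, (c s * c t) • A s t = ∑ s, c s ^ 2 • A s s := by
  have hsymm : ∀ s t, (c s * c t) • A s t + (c t * c s) • A t s
      = if s = t then (2 : 𝕜) • c s ^ 2 • A s s else 0 := by
    intro s t
    split_ifs with hst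
    · subst hst; rw [← add_smul, smul_smul, sq, two_mul]
    · rw [hA s t hst, mul_comm, smul_neg, neg_add_cancel]
  apply smul_right_injective E (two_ne_zero (α := 𝕜))
  calc (2 : 𝕜) • ∑ s, ∑ t, (c s * c t) • A s t
      = ∑ s, ∑ t, ((c s * c t) • A s t + (c t * c s) • A t s) := by
        rw [two_smul]; nth_rw 2 [Finset.sum_comm]; simp only [← Finset.sum_add_distrib]
    _ = (2 : 𝕜) • ∑ s, c s ^ 2 • A s s := by
        simp only [hsymm, Finset.sum_ite_eq, Finset.mem_univ, if_true, Finset.smul_sum]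

namespace HCAlg

variable (H : HCAlg 𝔸 m)

lemma mul_v_conj_v_self (s : Fin (m + 1)) : H.mul (H.v s) (H.conj (H.v s)) = H.one := by
  rcases eq_or_ne s 0 with rfl | hs
  · rw [H.v_zero, H.conj_one, H.one_mul']
  · exact H.v_norm s hs

lemma mul_v_conj_v_of_ne {s t : Fin (m + 1)} (hst : s ≠ t) :
    H.mul (H.v s) (H.conj (H.v t)) = -H.mul (H.v t) (H.conj (H.v s)) := by
  rcases eq_or_ne s 0 with rfl | hs
  · rw [H.v_zero, H.one_mul', H.conj_one, H.mul_one', H.conj_v_of_ne_zero hst.symm]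
  rcases eq_or_ne t 0 with rfl | ht
  · rw [H.v_zero, H.conj_one, H.mul_one', H.one_mul', H.conj_v_of_ne_zero hs, neg_neg]
  · simp only [H.conj_v_of_ne_zero hs, H.conj_v_of_ne_zero ht, map_neg, H.v_anticomm s t hs ht hst]

lemma sum_mul_v_conj_v_self : ∑ s, H.mul (H.v s) (H.conj (H.v s)) = ((m : ℝ) + 1) • H.one := by
  simp [mul_v_conj_v_self, ← Nat.cast_smul_eq_nsmul ℝ]

lemma embM_eq_linearCombination : embM H = Fintype.linearCombination ℝ H.v := by
  ext c
  rw [embM, Fintype.linearCombination_apply]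

lemma mul_embM_conj_embM (c : Fin (m + 1) → ℝ) :
    H.mul (embM H c) (H.conj (embM H c)) = (∑ s, c s ^ 2) • H.one := by
  have hexpand : H.mul (embM H c) (H.conj (embM H c))
      = ∑ s, ∑ t, (c s * c t) • H.mul (H.v s) (H.conj (H.v t)) := by
    simp only [embM, map_sum, map_smul, LinearMap.sum_apply, LinearMap.smul_apply, Finset.smul_sum,
      smul_smul]
    rw [Finset.sum_comm]
    simp only [mul_comm]
  rw [hexpand, Finset.sum_sum_mul_smul_eq_of_antisymm c _ fun s t => H.mul_v_conj_v_of_ne,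
    Finset.sum_smul]
  simp only [mul_v_conj_v_self]

lemma conj_embM_eval_eq (j : Fin n) : (fun z : Mn n m => H.conj (embM H (z j)))
    = H.conj ∘ₗ Fintype.linearCombination ℝ H.v ∘ₗ LinearMap.proj j := by
  ext z
  simp [H.embM_eq_linearCombination]

end HCAlg

lemma enormM_sq (c : Fin (m + 1) → ℝ) : enormM c ^ 2 = ∑ s, c s ^ 2 :=
  Real.sq_sqrt (by positivity)

def normSqMn (z : Mn n m) : ℝ := ∑ j, ∑ s, z j s ^ 2

lemma normSqMn_nonneg (z : Mn n m) : 0 ≤ normSqMn z := by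
  unfold normSqMn; positivity

lemma normSqMn_pos {z : Mn n m} (hz : z ≠ 0) : 0 < normSqMn z := by
  obtain ⟨j, hj⟩ := Function.ne_iff.mp hz
  obtain ⟨s, hs⟩ := Function.ne_iff.mp hj
  replace hs : z j s ≠ 0 := hs
  calc 0 < z j s ^ 2 := by positivity
  _ ≤ ∑ t, z j t ^ 2 := Finset.single_le_sum (fun t _ => sq_nonneg (z j t)) (Finset.mem_univ s)
  _ ≤ normSqMn z := Finset.single_le_sum (f := fun i => ∑ t, z i t ^ 2)
      (fun i _ => by positivity) (Finset.mem_univ j)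

lemma inv_enormMn_pow_eq_rpow (z : Mn n m) (k : ℕ) :
    (enormMn z ^ k)⁻¹ = normSqMn z ^ (-(k : ℝ) / 2) := by
  rw [show enormMn z = √(normSqMn z) from rfl, Real.sqrt_eq_rpow, ← Real.rpow_natCast,
    ← Real.rpow_mul (normSqMn_nonneg z), neg_div, Real.rpow_neg (normSqMn_nonneg z), one_div_mul_eq_div]

lemma differentiable_normSqMn : Differentiable ℝ (normSqMn : Mn n m → ℝ) := by
  unfold normSqMn; fun_prop

lemma pd_normSqMn (j : Fin n) (s : Fin (m + 1)) (w : Mn n m) :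
    pd normSqMn j s w = 2 * w j s := by
  unfold pd normSqMn
  simp (disch := fun_prop) [fderiv_fun_sum, fderiv_fun_pow, fderiv_apply, Pi.single_apply, apply_ite]

lemma hasFDerivAt_inv_enormMn_pow (k : ℕ) {w : Mn n m} (hw : w ≠ 0) :
    HasFDerivAt (fun z => (enormMn z ^ k)⁻¹)
      ((-(k : ℝ) / 2 * normSqMn w ^ (-(k : ℝ) / 2 - 1)) • fderiv ℝ normSqMn w) w := by
  simp only [inv_enormMn_pow_eq_rpow]
  exact (differentiable_normSqMn w).hasFDerivAt.rpow_const (Or.inl (normSqMn_pos hw).ne')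

lemma pd_inv_enormMn_pow (k : ℕ) {w : Mn n m} (hw : w ≠ 0) (j : Fin n) (s : Fin (m + 1)) :
    pd (fun z => (enormMn z ^ k)⁻¹) j s w = -(k : ℝ) / enormMn w ^ (k + 2) * w j s := by
  have hexp : -(k : ℝ) / 2 - 1 = -((k + 2 : ℕ) : ℝ) / 2 := by push_cast; ring
  rw [pd, (hasFDerivAt_inv_enormMn_pow k hw).fderiv, smul_apply, ← pd, pd_normSqMn, hexp,
    ← inv_enormMn_pow_eq_rpow, smul_eq_mul]
  ring

section PartialDerivatives

variable {E : Type} [NormedAddCommGroup E] [NormedSpace ℝ E]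

lemma pd_comp_sub (f : Mn n m → E) (x : Mn n m) (j : Fin n) (s : Fin (m + 1)) (y : Mn n m) :
    pd (fun z => f (z - x)) j s y = pd f j s (y - x) := by
  rw [pd, pd, fderiv_comp_sub]

lemma pd_smul {f : Mn n m → ℝ} {g : Mn n m → E} {w : Mn n m} (hf : DifferentiableAt ℝ f w)
    (hg : DifferentiableAt ℝ g w) (j : Fin n) (s : Fin (m + 1)) :
    pd (fun z => f z • g z) j s w = f w • pd g j s w + pd f j s w • g w := by
  simp only [pd, fderiv_fun_smul hf hg, add_apply, smul_apply,
    ContinuousLinearMap.smulRight_apply]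

lemma pd_linearMap (L : Mn n m →ₗ[ℝ] E) (j : Fin n) (s : Fin (m + 1)) (w : Mn n m) :
    pd L j s w = L (Pi.single j (Pi.single s 1)) := by
  rw [pd, ← LinearMap.coe_toContinuousLinearMap', ContinuousLinearMap.fderiv]

end PartialDerivatives

section Dirac

variable (H : HCAlg 𝔸 m)

lemma dbar_comp_sub (f : Mn n m → 𝔸) (x : Mn n m) (j : Fin n) (y : Mn n m) :
    dbar H (fun z => f (z - x)) j y = dbar H f j (y - x) := by
  simp only [dbar, pd_comp_sub]

lemma dbar_smul {f : Mn n m → ℝ} {g : Mn n m → 𝔸} {w : Mn n m} (hf : DifferentiableAt ℝ f w)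
    (hg : DifferentiableAt ℝ g w) (j : Fin n) :
    dbar H (fun z => f z • g z) j w
      = f w • dbar H g j w + H.mul (embM H fun s => pd f j s w) (g w) := by
  simp only [dbar, pd_smul hf hg, map_add, map_smul, Finset.sum_add_distrib, Finset.smul_sum, embM,
    map_sum, LinearMap.sum_apply, LinearMap.smul_apply]

lemma dbar_conj_embM (j : Fin n) (w : Mn n m) :
    dbar H (fun z => H.conj (embM H (z j))) j w = ((m : ℝ) + 1) • H.one := by
  simp only [dbar, H.conj_embM_eval_eq, pd_linearMap, LinearMap.comp_apply, LinearMap.proj_apply,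
    Pi.single_eq_same, Fintype.linearCombination_apply_single, one_smul, H.sum_mul_v_conj_v_self]

lemma Kker_eq_smul (j : Fin n) :
    Kker H n j = fun z =>
      ((usigma ((m + 1) * n))⁻¹ * (enormMn z ^ ((m + 1) * n))⁻¹) • H.conj (embM H (z j)) := by
  funext z
  rw [Kker, mul_inv]

lemma dbar_Kker (j : Fin n) {w : Mn n m} (hw : w ≠ 0) :
    dbar H (Kker H n j) j w = ((usigma ((m + 1) * n))⁻¹ *
      (((m : ℝ) + 1) / enormMn w ^ ((m + 1) * n)
        - ((m + 1) * n : ℕ) * enormM (w j) ^ 2 / enormMn w ^ ((m + 1) * n + 2))) • H.one := by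
  set N := (m + 1) * n
  set σ := usigma N
  have hf : DifferentiableAt ℝ (fun z => σ⁻¹ * (enormMn z ^ N)⁻¹) w :=
    (hasFDerivAt_inv_enormMn_pow N hw).differentiableAt.const_mul _
  have hg : DifferentiableAt ℝ (fun z => H.conj (embM H (z j))) w := by
    rw [H.conj_embM_eval_eq]
    exact (LinearMap.toContinuousLinearMap _).differentiableAt
  have hgrad : (fun s => pd (fun z => σ⁻¹ * (enormMn z ^ N)⁻¹) j s w)
      = (σ⁻¹ * (-(N : ℝ) / enormMn w ^ (N + 2))) • w j := by
    funext s
    rw [pd, fderiv_const_mul (hasFDerivAt_inv_enormMn_pow N hw).differentiableAt, smul_apply,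
      ← pd, pd_inv_enormMn_pow N hw, Pi.smul_apply, smul_eq_mul, smul_eq_mul, mul_assoc]
  rw [Kker_eq_smul, dbar_smul H hf hg, dbar_conj_embM, hgrad, H.embM_eq_linearCombination,
    map_smul, ← H.embM_eq_linearCombination, map_smul, LinearMap.smul_apply, H.mul_embM_conj_embM,
    ← enormM_sq, smul_smul, smul_smul, ← add_smul]
  congr 1
  ring

end Dirac

/-- (Computation in Lemma 3.3): for `y ≠ x` and each `j`,
`∂̄_{y_j} K_j(y − x) = ((m+1)/σ_{(m+1)n}) (1/|y−x|^{(m+1)n} − n|y_j−x_j|²/|y−x|^{(m+1)n+2})`,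
a real multiple of the unity of `𝔸`. -/
theorem dbar_Kj_formula (H : HCAlg 𝔸 m)
    (j : Fin n) (x y : Mn n m) (hyx : y ≠ x) :
    dbar H (fun z => Kker H n j (z - x)) j y =
      (((m + 1 : ℝ) / usigma ((m + 1) * n)) *
        (1 / enormMn (y - x) ^ ((m + 1) * n) -
          (n : ℝ) * enormM ((y - x) j) ^ 2 / enormMn (y - x) ^ ((m + 1) * n + 2))) • H.one := by
  rw [dbar_comp_sub, dbar_Kker H j (sub_ne_zero.2 hyx)]
  congr 1
  push_cast
  ring
end
end
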